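/- Suppose the graded ring R = ℚ[x_1,...,x_h]/⟨x_i ∏_{j=1}^{n_i}(∑_{k<i} a^i_{jk}x_k + x_i)⟩ is isomorphic as a graded ℚ-algebra to ℚ[y_1,...,y_h]/⟨y_i^{n_i+1}⟩. Then there exist nonzero integer vectors z_1,...,z_h in the lattice spanned by x_1,...,x_h, linearly independent, such that z_i^{n_i+1} = 0 but z_i^{n_i} ≠ 0 in R for each i. -/

import Mathlib

open MvPolynomial

/-- The defining ideal of the rational cohomology ring of a generalized Bott manifold. -/
noncomputable def genBottIdeal (h : ℕ) (n : Fin h → ℕ)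
    (a : (i : Fin h) → Fin (n i) → Fin h → ℤ) :
    Ideal (MvPolynomial (Fin h) ℚ) :=
  Ideal.span (Set.range fun i : Fin h =>
    X i * ∏ j : Fin (n i), ((∑ k : Fin h, C ((a i j k : ℚ)) * X k) + X i))

/-- The ideal `⟨y_i^{n_i+1}⟩` presenting `H^*(∏ ℂP^{n_i}; ℚ)`. -/
noncomputable def prodProjIdeal (h : ℕ) (n : Fin h → ℕ) :
    Ideal (MvPolynomial (Fin h) ℚ) :=
  Ideal.span (Set.range fun i : Fin h => (X i : MvPolynomial (Fin h) ℚ) ^ (n i + 1))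

/-!
Both ideals lie in the square of the augmentation ideal, so the linear forms in the generators
inject into both quotients. The isomorphism `φ` maps the `h`-dimensional space of linear forms of
the first ring into that of the second, hence onto it: every `y_i` is `φ w_i` for a linear form
`w_i`, and the `w_i` are linearly independent. As `φ` is injective, `w_i ^ (n_i + 1) = 0` and
`w_i ^ n_i ≠ 0`; clearing a common denominator of the `w_i` gives the integer vectors `z_i`.
-/

theorem exists_linearIndependent_map_eq {K A B σ : Type*} [Field K] [AddCommGroup A] [Module K A]
    [AddCommGroup B] [Module K B] [Fintype σ] (φ : A →ₗ[K] B) (hφ : Function.Injective φ)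
    {x : σ → A} {y : σ → B} (hx : LinearIndependent K x) (hy : LinearIndependent K y)
    (hxy : ∀ i, φ (x i) ∈ Submodule.span K (Set.range y)) :
    ∃ q : σ → σ → K, LinearIndependent K q ∧ ∀ i, φ (∑ j, q i j • x j) = y i := by
  have := FiniteDimensional.span_of_finite K (Set.finite_range y)
  have hspan : Submodule.span K (Set.range (φ ∘ x)) = Submodule.span K (Set.range y) :=
    Submodule.eq_of_le_of_finrank_eq (Submodule.span_le.mpr (Set.range_subset_iff.mpr hxy))
      (by rw [finrank_span_eq_card (hx.map' φ (LinearMap.ker_eq_bot.mpr hφ)),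
        finrank_span_eq_card hy])
  have hy_mem (i : σ) : ∃ c : σ → K, ∑ j, c j • φ (x j) = y i :=
    (Submodule.mem_span_range_iff_exists_fun K).mp (hspan ▸ Submodule.subset_span ⟨i, rfl⟩)
  choose q hq using hy_mem
  have hφq (i : σ) : φ (∑ j, q i j • x j) = y i := by simpa only [map_sum, map_smul] using hq i
  refine ⟨q, LinearIndependent.of_comp (φ ∘ₗ Fintype.linearCombination K x) ?_, hφq⟩
  convert hy using 1
  funext i
  simp [Fintype.linearCombination_apply, hφq]

theorem exists_int_mul_eq {ι κ : Type*} [Finite ι] [Finite κ] (q : ι → κ → ℚ) :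
    ∃ b : ℤ, b ≠ 0 ∧ ∃ z : ι → κ → ℤ, ∀ i j, (z i j : ℚ) = b * q i j := by
  obtain ⟨b, hb⟩ := IsLocalization.exist_integer_multiples_of_finite (nonZeroDivisors ℤ)
    fun p : ι × κ => q p.1 p.2
  choose z hz using hb
  refine ⟨b, nonZeroDivisors.coe_ne_zero b, fun i j => z (i, j), fun i j => ?_⟩
  simpa [zsmul_eq_mul] using hz (i, j)

theorem LinearIndependent.int_of_cast_eq_mul {ι κ : Type*} [Finite κ] {q : ι → κ → ℚ}
    (hq : LinearIndependent ℚ q) {b : ℤ} (hb : b ≠ 0) {z : ι → κ → ℤ}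
    (hz : ∀ i j, (z i j : ℚ) = b * q i j) : LinearIndependent ℤ z := by
  rw [← linearIndependent_algebraMap_comp_iff (S := ℚ)]
  have hzq : (fun i => algebraMap ℤ ℚ ∘ z i) = fun i => (b : ℚ) • q i := by
    funext i j
    simp [hz]
  rw [hzq]
  exact hq.units_smul fun _ => Units.mk0 (b : ℚ) (Int.cast_ne_zero.mpr hb)

namespace MvPolynomial

variable {σ R : Type*} [CommRing R]

theorem X_mul_mem_ker_constantCoeff_sq (i : σ) {p : MvPolynomial σ R} (hp : constantCoeff p = 0) :
    X i * p ∈ RingHom.ker (constantCoeff : MvPolynomial σ R →+* R) ^ 2 := by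
  rw [sq]
  exact Ideal.mul_mem_mul (RingHom.mem_ker.mpr (constantCoeff_X R i)) (RingHom.mem_ker.mpr hp)

open TrivSqZeroExt

variable [DecidableEq σ]

/-- Keeps exactly the constant and linear parts of a polynomial, as products of two elements of
`σ → R` vanish in the square-zero extension. -/
noncomputable def linearEval : MvPolynomial σ R →ₐ[R] TrivSqZeroExt R (σ → R) :=
  aeval fun i => inr (Pi.single i 1)

theorem fst_linearEval (p : MvPolynomial σ R) : (linearEval p).fst = constantCoeff p := by
  induction p using MvPolynomial.induction_on with
  | C r => simp [linearEval, algebraMap_eq_inl]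
  | add p q hp hq => simp [hp, hq]
  | mul_X p i hp => simp [linearEval] at hp ⊢

theorem linearEval_sum_C_mul_X [Fintype σ] (c : σ → R) :
    linearEval (∑ j, C (c j) * X j) = inr c := by
  simp only [linearEval, map_sum, map_mul, aeval_C, aeval_X, algebraMap_eq_inl, inl_mul_inr,
    ← inr_sum]
  congr 1
  ext j
  simp [Pi.single_apply]

theorem ker_constantCoeff_sq_le_ker_linearEval :
    RingHom.ker (constantCoeff : MvPolynomial σ R →+* R) ^ 2 ≤
      RingHom.ker (linearEval (σ := σ) (R := R)) := by
  rw [sq, Ideal.mul_le]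
  intro p hp q hq
  rw [RingHom.mem_ker] at hp hq ⊢
  rw [map_mul, ← inl_fst_add_inr_snd_eq (linearEval p), ← inl_fst_add_inr_snd_eq (linearEval q),
    fst_linearEval, fst_linearEval, hp, hq]
  simp

theorem linearIndependent_mk_X [Fintype σ] {I : Ideal (MvPolynomial σ R)}
    (hI : I ≤ RingHom.ker (constantCoeff : MvPolynomial σ R →+* R) ^ 2) :
    LinearIndependent R fun i => Ideal.Quotient.mk I (X i) := by
  rw [Fintype.linearIndependent_iff]
  intro c hc
  have hmem : ∑ j, C (c j) * X j ∈ I := by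
    rw [← Ideal.Quotient.eq_zero_iff_mem, ← hc, map_sum]
    simp_rw [C_mul', ← Ideal.Quotient.mkₐ_eq_mk R, map_smul]
  have hc_zero := ker_constantCoeff_sq_le_ker_linearEval (hI hmem)
  rw [RingHom.mem_ker, linearEval_sum_C_mul_X, ← inr_zero] at hc_zero
  exact congrFun (inr_injective hc_zero)

end MvPolynomial

theorem genBottIdeal_le_ker_constantCoeff_sq {h : ℕ} {n : Fin h → ℕ} (hn : ∀ i, 1 ≤ n i)
    (a : (i : Fin h) → Fin (n i) → Fin h → ℤ) :
    genBottIdeal h n a ≤ RingHom.ker (constantCoeff : MvPolynomial (Fin h) ℚ →+* ℚ) ^ 2 := by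
  refine Ideal.span_le.mpr (Set.range_subset_iff.mpr fun i => X_mul_mem_ker_constantCoeff_sq i ?_)
  rw [map_prod]
  refine Finset.prod_eq_zero (Finset.mem_univ ⟨0, hn i⟩) ?_
  simp

theorem prodProjIdeal_le_ker_constantCoeff_sq {h : ℕ} {n : Fin h → ℕ} (hn : ∀ i, 1 ≤ n i) :
    prodProjIdeal h n ≤ RingHom.ker (constantCoeff : MvPolynomial (Fin h) ℚ →+* ℚ) ^ 2 := by
  refine Ideal.span_le.mpr (Set.range_subset_iff.mpr fun i => ?_)
  rw [SetLike.mem_coe, pow_succ' (X i : MvPolynomial (Fin h) ℚ)]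
  exact X_mul_mem_ker_constantCoeff_sq (R := ℚ) i (by
    rw [map_pow, constantCoeff_X ℚ i, zero_pow (Nat.one_le_iff_ne_zero.mp (hn i))])

theorem prodProjIdeal.mk_X_pow_succ_eq_zero (h : ℕ) (n : Fin h → ℕ) (i : Fin h) :
    Ideal.Quotient.mk (prodProjIdeal h n) (X i) ^ (n i + 1) = 0 := by
  rw [← map_pow, Ideal.Quotient.eq_zero_iff_mem]
  exact Ideal.subset_span ⟨i, rfl⟩

theorem prodProjIdeal.mk_X_pow_ne_zero (h : ℕ) (n : Fin h → ℕ) (i : Fin h) :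
    Ideal.Quotient.mk (prodProjIdeal h n) (X i) ^ n i ≠ 0 := by
  simp_rw [← map_pow, Ne, Ideal.Quotient.eq_zero_iff_mem, prodProjIdeal, X_pow_eq_monomial]
  rw [Set.range_comp' (fun s => monomial s (1 : ℚ)), mem_ideal_span_monomial_image]
  simp only [support_monomial, one_ne_zero, if_false, Finset.mem_singleton, forall_eq,
    Set.mem_range, exists_exists_eq_and, not_exists]
  intro j hle
  have := hle j
  rw [Finsupp.single_apply, Finsupp.single_apply, if_pos rfl] at this
  split_ifs at this with hij
  · subst hij
    omega
  · omega

theorem stmt_12_general (h : ℕ) (n : Fin h → ℕ) (hn : ∀ i, 1 ≤ n i)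
    (a : (i : Fin h) → Fin (n i) → Fin h → ℤ)
    (hiso : ∃ φ : (MvPolynomial (Fin h) ℚ ⧸ genBottIdeal h n a) ≃ₐ[ℚ]
        (MvPolynomial (Fin h) ℚ ⧸ prodProjIdeal h n),
      ∀ i : Fin h,
        φ (Ideal.Quotient.mk (genBottIdeal h n a) (X i)) ∈
          Submodule.span ℚ
            (Set.range fun j : Fin h =>
              Ideal.Quotient.mk (prodProjIdeal h n) (X j))) :
    ∃ z : Fin h → Fin h → ℤ,
      (∀ i, z i ≠ 0) ∧ LinearIndependent ℤ z ∧
      ∀ i : Fin h,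
        (Ideal.Quotient.mk (genBottIdeal h n a)
            (∑ j, C ((z i j : ℚ)) * X j)) ^ (n i + 1) = 0 ∧
        (Ideal.Quotient.mk (genBottIdeal h n a)
            (∑ j, C ((z i j : ℚ)) * X j)) ^ (n i) ≠ 0 := by
  obtain ⟨φ, hφ⟩ := hiso
  obtain ⟨q, hq, hφq⟩ := exists_linearIndependent_map_eq φ.toLinearMap φ.injective
    (linearIndependent_mk_X (genBottIdeal_le_ker_constantCoeff_sq hn a))
    (linearIndependent_mk_X (prodProjIdeal_le_ker_constantCoeff_sq hn)) hφ
  obtain ⟨b, hb, z, hz⟩ := exists_int_mul_eq q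
  have hz_li : LinearIndependent ℤ z := hq.int_of_cast_eq_mul hb hz
  refine ⟨z, fun i => hz_li.ne_zero i, hz_li, fun i => ?_⟩
  set w := ∑ j, q i j • Ideal.Quotient.mk (genBottIdeal h n a) (X j)
  have hzw : Ideal.Quotient.mk (genBottIdeal h n a) (∑ j, C (z i j : ℚ) * X j) = (b : ℚ) • w := by
    simp_rw [w, Finset.smul_sum, smul_smul, ← hz, map_sum, C_mul', ← Ideal.Quotient.mkₐ_eq_mk ℚ,
      map_smul]
  have hw_pow (m : ℕ) : w ^ m = 0 ↔ Ideal.Quotient.mk (prodProjIdeal h n) (X i) ^ m = 0 := by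
    rw [← map_eq_zero_iff φ φ.injective, map_pow, ← AlgEquiv.toLinearMap_apply, hφq]
  rw [hzw, smul_pow, smul_pow]
  simp [hb, hw_pow, prodProjIdeal.mk_X_pow_succ_eq_zero, prodProjIdeal.mk_X_pow_ne_zero]

/-- Lemma 3: if the cohomology ring of the generalized Bott manifold is isomorphic, as a
graded `ℚ`-algebra, to `ℚ[y_1,…,y_h]/⟨y_i^{n_i+1}⟩`, then there are linearly independent
nonzero integer vectors `z_1,…,z_h` in the lattice spanned by `x_1,…,x_h` with
`z_i^{n_i+1} = 0` and `z_i^{n_i} ≠ 0`. -/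
theorem stmt_12 (h : ℕ) (n : Fin h → ℕ) (hn : ∀ i, 1 ≤ n i)
    (a : (i : Fin h) → Fin (n i) → Fin h → ℤ)
    (ha : ∀ i j k, ¬ k < i → a i j k = 0)
    (hiso : ∃ φ : (MvPolynomial (Fin h) ℚ ⧸ genBottIdeal h n a) ≃ₐ[ℚ]
        (MvPolynomial (Fin h) ℚ ⧸ prodProjIdeal h n),
      ∀ i : Fin h,
        φ (Ideal.Quotient.mk (genBottIdeal h n a) (X i)) ∈
          Submodule.span ℚ
            (Set.range fun j : Fin h =>
              Ideal.Quotient.mk (prodProjIdeal h n) (X j))) :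
    ∃ z : Fin h → Fin h → ℤ,
      (∀ i, z i ≠ 0) ∧ LinearIndependent ℤ z ∧
      ∀ i : Fin h,
        (Ideal.Quotient.mk (genBottIdeal h n a)
            (∑ j, C ((z i j : ℚ)) * X j)) ^ (n i + 1) = 0 ∧
        (Ideal.Quotient.mk (genBottIdeal h n a)
            (∑ j, C ((z i j : ℚ)) * X j)) ^ (n i) ≠ 0 :=
  stmt_12_general h n hn a hiso
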